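/- arXiv:0903.3106 — 5 statements merged into one kernel-verified Lean document; each statement's English description precedes it below -/
import Mathlib

section
/- Let G be a directed graph and let i be a vertex. Whether the vertex i belongs to the greedy maximal independent set (constructed by repeatedly picking a source strongly connected component, processing its vertices in descending identifier order) depends only on the subgraph induced by i and the ancestors of i: if two graphs G and G' agree on the induced subgraph of ancestors of i (including i), then i belongs to the greedy MIS of G iff it belongs to the greedy MIS of G'. -/
/-- Reachability in a directed graph with edge relation `E`. -/
def Reach {V : Type*} (E : V → V → Prop) : V → V → Prop := Relation.ReflTransGen E

/-- The priority relation used by the greedy unidirectional MIS algorithm (vertices carry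
distinct identifiers, here the linear order on `V` itself): `w` has priority over `v` if
`w` lies in a strictly upstream strongly connected component, or in the same strongly
connected component with a larger identifier. -/
def Priority {V : Type*} [LinearOrder V] (E : V → V → Prop) (w v : V) : Prop :=
  (Reach E w v ∧ ¬ Reach E v w) ∨ (Reach E w v ∧ Reach E v w ∧ v < w)

/-- `S` is the output of the greedy UMIS algorithm for `E` (repeatedly pick a source
strongly connected component and process its vertices in descending identifier order,
adding a vertex whenever this keeps the set independent for the symmetrized adjacency):
equivalently, `v ∈ S` iff no symmetrized neighbor `w` of `v` with priority over `v`
belongs to `S`. -/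
def GreedyUMIS {V : Type*} [LinearOrder V] (E : V → V → Prop) (S : Set V) : Prop :=
  ∀ v : V, v ∈ S ↔ ∀ w : V, (E v w ∨ E w v) → Priority E w v → w ∉ S

/-- If the edges agree on ancestors of `i`, reachability between ancestors transfers. -/
lemma reach_agree {V : Type*} (E E' : V → V → Prop) (i : V)
    (hagree : ∀ u v : V, Reach E u i → Reach E v i → E u v → E' u v) :
    ∀ v, Reach E v i → ∀ w, Reach E w v → Reach E' w v := by
  intro v hv w hw
  induction hw using Relation.ReflTransGen.head_induction_on with
  | refl => exact Relation.ReflTransGen.refl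
  | head h hrest ih =>
    rename_i a c
    have hci : Reach E c i := Relation.ReflTransGen.trans hrest hv
    have hai : Reach E a i := Relation.ReflTransGen.head h hci
    exact Relation.ReflTransGen.head (hagree a c hai hci h) ih


/-- Whether a vertex `i` belongs to the greedy maximal independent set depends only on the
subgraph induced by `i` and its ancestors: if two graphs `E` and `E'` agree on the
subgraph induced by the ancestors of `i` (including `i`), then `i` belongs to the greedy
MIS of `E` iff it belongs to the greedy MIS of `E'`. -/
theorem stmt7 {V : Type*} [Fintype V] [LinearOrder V] (E E' : V → V → Prop)
    (S S' : Set V) (hS : GreedyUMIS E S) (hS' : GreedyUMIS E' S') (i : V)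
    (hanc : ∀ u : V, Reach E u i ↔ Reach E' u i)
    (hagree : ∀ u v : V, Reach E u i → Reach E v i → (E u v ↔ E' u v)) :
    i ∈ S ↔ i ∈ S' := by
  have RA : ∀ v, Reach E v i → ∀ w, Reach E w v → Reach E' w v :=
    reach_agree E E' i (fun u v hu hv h => (hagree u v hu hv).mp h)
  have RA' : ∀ v, Reach E' v i → ∀ w, Reach E' w v → Reach E w v :=
    reach_agree E' E i (fun u v hu hv h =>
      (hagree u v ((hanc u).mpr hu) ((hanc v).mpr hv)).mpr h)
  -- priority agreement on ancestors
  have prio : ∀ v, Reach E v i → ∀ w, (Priority E w v ↔ Priority E' w v) := by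
    intro v hv w
    have hv' : Reach E' v i := (hanc v).mp hv
    constructor
    · rintro (⟨h1, h2⟩ | ⟨h1, h2, h3⟩)
      · refine Or.inl ⟨RA v hv w h1, fun hc => h2 ?_⟩
        exact RA' w ((hanc w).mp (h1.trans hv)) v hc
      · exact Or.inr ⟨RA v hv w h1, RA w (h1.trans hv) v h2, h3⟩
    · rintro (⟨h1, h2⟩ | ⟨h1, h2, h3⟩)
      · refine Or.inl ⟨RA' v hv' w h1, fun hc => h2 ?_⟩
        exact RA w ((hanc w).mpr (h1.trans hv')) v hc
      · exact Or.inr ⟨RA' v hv' w h1, RA' w (h1.trans hv') v h2, h3⟩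
  -- well-foundedness of Priority E
  have htrans : ∀ a b c : V, Priority E a b → Priority E b c → Priority E a c := by
    rintro a b c (⟨h1, h2⟩ | ⟨h1, h2, h3⟩) (⟨g1, g2⟩ | ⟨g1, g2, g3⟩)
    · exact Or.inl ⟨h1.trans g1, fun hc => g2 (hc.trans h1)⟩
    · exact Or.inl ⟨h1.trans g1, fun hc => h2 (g1.trans hc)⟩
    · exact Or.inl ⟨h1.trans g1, fun hc => g2 (hc.trans h1)⟩
    · exact Or.inr ⟨h1.trans g1, g2.trans h2, g3.trans h3⟩
  have hirr : ∀ a : V, ¬ Priority E a a := by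
    rintro a (⟨h1, h2⟩ | ⟨h1, h2, h3⟩)
    · exact h2 h1
    · exact lt_irrefl a h3
  have hwf : WellFounded (fun w v : V => Priority E w v) := by
    haveI : IsTrans V (fun w v : V => Priority E w v) := ⟨fun a b c h g => htrans a b c h g⟩
    haveI : IsIrrefl V (fun w v : V => Priority E w v) := ⟨hirr⟩
    exact Finite.wellFounded_of_trans_of_irrefl _
  have key : ∀ v, Reach E v i → (v ∈ S ↔ v ∈ S') := by
    intro v
    induction v using WellFounded.induction hwf with
    | _ v ih =>
      intro hv
      rw [hS v, hS' v]
      constructor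
      · intro h w hw hp
        have hpE : Priority E w v := (prio v hv w).mpr hp
        have hw1 : Reach E w v := hpE.elim (fun x => x.1) (fun x => x.1)
        have hwi : Reach E w i := hw1.trans hv
        have hedge : E v w ∨ E w v := by
          rcases hw with hw | hw
          · exact Or.inl ((hagree v w hv hwi).mpr hw)
          · exact Or.inr ((hagree w v hwi hv).mpr hw)
        exact fun hwS' => h w hedge hpE ((ih w hpE hwi).mpr hwS')
      · intro h w hw hp
        have hw1 : Reach E w v := hp.elim (fun x => x.1) (fun x => x.1)
        have hwi : Reach E w i := hw1.trans hv
        have hpE' : Priority E' w v := (prio v hv w).mp hp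
        have hedge : E' v w ∨ E' w v := by
          rcases hw with hw | hw
          · exact Or.inl ((hagree v w hv hwi).mp hw)
          · exact Or.inr ((hagree w v hwi hv).mp hw)
        exact fun hwS => h w hedge hpE' ((ih w hp hwi).mp hwS)
  exact key i Relation.ReflTransGen.refl
end

section
/- In a directed graph, if every vertex on a directed path from j to i other than the endpoints is distinct from both i and j, and the path from j to i is a shortest path among all pairs of distinct vertices sharing the same identifier, then all vertices on the path have pairwise distinct identifiers except possibly the pair (i, j). -/
/-!
Let `a < b` index two vertices of the shortest walk with equal identifiers, not both endpoints.
If `p a ≠ p b`, the sub-walk from `p a` to `p b` is a shorter walk between distinct vertices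
with equal identifiers. If `p a = p b`, cutting out the closed sub-walk between them leaves a
shorter walk from `j` to `i`. Either way minimality is contradicted.
-/

section Walks

variable {V L : Type*} {E : V → V → Prop}

-- Indexed by `ℕ` rather than `Fin (n + 1)` so that re-indexing needs no bound proofs;
-- the values of `p` beyond `n` play no role.
def IsWalk (E : V → V → Prop) (p : ℕ → V) (n : ℕ) : Prop :=
  ∀ k < n, E (p k) (p (k + 1))

namespace IsWalk

variable {p : ℕ → V} {n : ℕ}

theorem shift (hp : IsWalk E p n) {a d : ℕ} (had : a + d ≤ n) :
    IsWalk E (fun k => p (a + k)) d :=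
  fun k hk => hp (a + k) (by omega)

theorem exists_splice (hp : IsWalk E p n) {a d : ℕ} (had : a + d ≤ n)
    (hcycle : p a = p (a + d)) :
    ∃ q : ℕ → V, q 0 = p 0 ∧ q (n - d) = p n ∧ IsWalk E q (n - d) := by
  refine ⟨fun k => if k < a then p k else p (k + d), ?_, ?_, fun k hk => ?_⟩
  · rcases Nat.eq_zero_or_pos a with rfl | ha
    · simpa using hcycle.symm
    · simp [ha]
  · simp [show ¬n - d < a by omega, show n - d + d = n by omega]
  · rcases lt_trichotomy (k + 1) a with hka | hka | hak
    · simpa [hka, (Nat.lt_succ_self k).trans hka] using hp k (by omega)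
    · subst hka
      simpa [← hcycle] using hp k (by omega)
    · simpa [show ¬k < a by omega, hak.not_gt, Nat.add_right_comm]
        using hp (k + d) (by omega)

theorem of_fin {m : ℕ} {p : Fin (m + 1) → V} (hp : ∀ a : Fin m, E (p a.castSucc) (p a.succ)) :
    IsWalk E (fun k => p (Fin.clamp k m)) m := by
  intro k hk
  convert hp ⟨k, hk⟩ using 2 <;> ext <;> simp <;> omega

theorem eq_zero_and_eq_length_of_idf_eq {idf : V → L} {m : ℕ} (hp : IsWalk E p m)
    (hne : p 0 ≠ p m) (hid : idf (p 0) = idf (p m))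
    (hmin : ∀ (n : ℕ) (q : ℕ → V), q 0 ≠ q n → idf (q 0) = idf (q n) → IsWalk E q n → m ≤ n)
    {a b : ℕ} (hab : a < b) (hbm : b ≤ m) (hidab : idf (p a) = idf (p b)) :
    a = 0 ∧ b = m := by
  obtain ⟨d, rfl⟩ : ∃ d, b = a + d := ⟨b - a, by omega⟩
  suffices m ≤ d by omega
  by_cases hcycle : p a = p (a + d)
  · obtain ⟨q, hq0, hqm, hq⟩ := hp.exists_splice hbm hcycle
    have := hmin (m - d) q (by rwa [hq0, hqm]) (by rwa [hq0, hqm]) hq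
    omega
  · exact hmin d _ (by simpa using hcycle) (by simpa using hidab) (hp.shift hbm)

end IsWalk

end Walks

theorem stmt8_general {V L : Type*} (E : V → V → Prop) (idf : V → L) (i j : V) (hij : i ≠ j)
    (hid : idf i = idf j) (m : ℕ) (p : Fin (m + 1) → V)
    (hp0 : p 0 = j) (hpm : p (Fin.last m) = i)
    (hstep : ∀ a : Fin m, E (p a.castSucc) (p a.succ))
    (hmin : ∀ (m' : ℕ) (u v : V) (q : Fin (m' + 1) → V), u ≠ v → idf u = idf v →
      q 0 = u → q (Fin.last m') = v →
      (∀ a : Fin m', E (q a.castSucc) (q a.succ)) → m ≤ m') :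
    ∀ a b : Fin (m + 1), a ≠ b → idf (p a) = idf (p b) →
      (a = 0 ∧ b = Fin.last m) ∨ (b = 0 ∧ a = Fin.last m) := by
  have hP : ∀ a : Fin (m + 1), p (Fin.clamp a m) = p a := fun a =>
    congrArg p (Fin.ext (by simp [a.is_le]))
  have hP0 : p (Fin.clamp 0 m) = j := by simpa [hp0] using hP 0
  have hPm : p (Fin.clamp m m) = i := by simpa [hpm] using hP (Fin.last m)
  have hminℕ (n : ℕ) (q : ℕ → V) (hne : q 0 ≠ q n) (hidq : idf (q 0) = idf (q n))
      (hq : IsWalk E q n) : m ≤ n :=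
    hmin n _ _ (fun k : Fin (n + 1) => q k) hne hidq (by simp) (by simp) fun a => hq a a.isLt
  have hordered (a b : Fin (m + 1)) (hab : a < b) (hidab : idf (p a) = idf (p b)) :
      a = 0 ∧ b = Fin.last m := by
    have := (IsWalk.of_fin hstep).eq_zero_and_eq_length_of_idf_eq (idf := idf)
      (by rw [hP0, hPm]; exact hij.symm) (by rw [hP0, hPm, hid]) hminℕ hab b.is_le
      (by simp only [hP, hidab])
    exact ⟨Fin.ext this.1, Fin.ext this.2⟩
  intro a b hne hidab
  rcases hne.lt_or_gt with h | h
  · exact .inl (hordered a b h hidab)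
  · exact .inr (hordered b a h hidab.symm)

/-- In a directed graph with a labeling `id : V → L`, suppose `p` is a directed path of
length `m` from `j` to `i`, where `i ≠ j` and `id i = id j`, every vertex of the path
other than the endpoints is distinct from both `i` and `j`, and `m` is minimal among the
lengths of directed paths between any pair of distinct vertices sharing the same
identifier.  Then all vertices on the path have pairwise distinct identifiers, except for
the endpoint pair `(j, i)`. -/
theorem stmt8 {V L : Type*} (E : V → V → Prop) (idf : V → L) (i j : V) (hij : i ≠ j)
    (hid : idf i = idf j) (m : ℕ) (p : Fin (m + 1) → V)
    (hp0 : p 0 = j) (hpm : p (Fin.last m) = i)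
    (hstep : ∀ a : Fin m, E (p a.castSucc) (p a.succ))
    (hinternal : ∀ a : Fin (m + 1), a ≠ 0 → a ≠ Fin.last m → p a ≠ i ∧ p a ≠ j)
    (hmin : ∀ (m' : ℕ) (u v : V) (q : Fin (m' + 1) → V), u ≠ v → idf u = idf v →
      q 0 = u → q (Fin.last m') = v →
      (∀ a : Fin m', E (q a.castSucc) (q a.succ)) → m ≤ m') :
    ∀ a b : Fin (m + 1), a ≠ b → idf (p a) = idf (p b) →
      (a = 0 ∧ b = Fin.last m) ∨ (b = 0 ∧ a = Fin.last m) :=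
  stmt8_general E idf i j hij hid m p hp0 hpm hstep hmin
end

section
/- Let G be a finite directed graph and i a vertex. Suppose id : V → L is a labeling such that any two distinct ancestors of i with the same label are mutually unreachable. Form the quotient graph G_i of the subgraph induced by i and its ancestors by merging vertices with equal labels. Then for any ancestor j of i: j's label is reachable from i's label in G_i if and only if j is reachable from i in the induced subgraph. -/
/-!
Reachability always descends to the quotient, since every edge of the induced subgraph
becomes an edge between labels. Conversely, lift a label path from `id i` edge by edge.
Whenever the lift has reached a vertex `w` reachable from `i`, any ancestor `u` with the
label of `w` reaches `w` through `i`, so the labeling hypothesis forces `u = w`; hence the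
edge `u → v` witnessing the next quotient edge starts at `w`. At the end the same argument
identifies the endpoint of the lift with `j`.
-/

open Relation

theorem Relation.ReflTransGen.exists_lift {α β : Type*} {r : α → α → Prop}
    {q : β → β → Prop} {f : α → β} {a : α} {b : β}
    (hlift : ∀ w, ReflTransGen r a w → ∀ c, q (f w) c → ∃ v, r w v ∧ f v = c)
    (h : ReflTransGen q (f a) b) : ∃ w, ReflTransGen r a w ∧ f w = b := by
  induction h with
  | refl => exact ⟨a, .refl, rfl⟩
  | tail _ hcd ih =>
    obtain ⟨w, haw, rfl⟩ := ih
    obtain ⟨v, hwv, rfl⟩ := hlift w haw _ hcd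
    exact ⟨v, haw.tail hwv, rfl⟩

theorem stmt9_general {V L : Type*} (E : V → V → Prop) (i : V) (idf : V → L)
    -- ancestors of `i` (including `i` itself)
    (Anc : V → Prop) (hAnc : ∀ u, Anc u ↔ Relation.ReflTransGen E u i)
    (hlabel : ∀ u v, Anc u → Anc v → u ≠ v → idf u = idf v →
      ¬ Relation.ReflTransGen E u v ∧ ¬ Relation.ReflTransGen E v u)
    -- edge relation of the subgraph induced by `i` and its ancestors
    (Esub : V → V → Prop) (hEsub : ∀ u v, Esub u v ↔ Anc u ∧ Anc v ∧ E u v)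
    -- edge relation of the quotient graph `G_i` on labels
    (EQ : L → L → Prop)
    (hEQ : ∀ a b, EQ a b ↔ ∃ u v, Esub u v ∧ idf u = a ∧ idf v = b) :
    ∀ j : V, Anc j →
      (Relation.ReflTransGen EQ (idf i) (idf j) ↔ Relation.ReflTransGen Esub i j) := by
  intro j hj
  have hanc_of_reach : ∀ {w}, ReflTransGen Esub i w → Anc w := fun hiw => by
    rcases (ReflTransGen.cases_tail_iff _ _ _).1 hiw with rfl | ⟨u, -, huw⟩
    · exact (hAnc _).2 .refl
    · exact ((hEsub u _).1 huw).2.1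
  have heq_of_label_eq : ∀ {u w}, Anc u → ReflTransGen Esub i w → idf u = idf w → u = w := by
    intro u w hu hiw hlab
    by_contra hne
    refine (hlabel u w hu (hanc_of_reach hiw) hne hlab).1 (((hAnc u).1 hu).trans ?_)
    exact ReflTransGen.mono (fun x y hxy => ((hEsub x y).1 hxy).2.2) _ _ hiw
  constructor
  · intro h
    obtain ⟨w, hiw, hwj⟩ := h.exists_lift fun w hiw c hc => by
      obtain ⟨u, v, huv, hu, rfl⟩ := (hEQ _ c).1 hc
      obtain rfl := heq_of_label_eq ((hEsub u v).1 huv).1 hiw hu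
      exact ⟨v, huv, rfl⟩
    rwa [heq_of_label_eq hj hiw hwj.symm]
  · intro h
    exact h.lift idf (fun u v huv => (hEQ _ _).2 ⟨u, v, huv, rfl, rfl⟩)

/-- Let `G` be a finite directed graph, `i` a vertex, and `id : V → L` a labeling such
that any two distinct ancestors of `i` (vertices reaching `i`, including `i` itself) with
the same label are mutually unreachable.  Form the quotient graph `G_i` of the subgraph
induced by `i` and its ancestors by merging vertices with equal labels.  Then for any
ancestor `j` of `i`: `id j` is reachable from `id i` in `G_i` iff `j` is reachable from
`i` in the induced subgraph. -/
theorem stmt9 {V L : Type*} [Fintype V] (E : V → V → Prop) (i : V) (idf : V → L)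
    -- ancestors of `i` (including `i` itself)
    (Anc : V → Prop) (hAnc : ∀ u, Anc u ↔ Relation.ReflTransGen E u i)
    (hlabel : ∀ u v, Anc u → Anc v → u ≠ v → idf u = idf v →
      ¬ Relation.ReflTransGen E u v ∧ ¬ Relation.ReflTransGen E v u)
    -- edge relation of the subgraph induced by `i` and its ancestors
    (Esub : V → V → Prop) (hEsub : ∀ u v, Esub u v ↔ Anc u ∧ Anc v ∧ E u v)
    -- edge relation of the quotient graph `G_i` on labels
    (EQ : L → L → Prop)
    (hEQ : ∀ a b, EQ a b ↔ ∃ u v, Esub u v ∧ idf u = a ∧ idf v = b) :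
    ∀ j : V, Anc j →
      (Relation.ReflTransGen EQ (idf i) (idf j) ↔ Relation.ReflTransGen Esub i j) :=
  stmt9_general E i idf Anc hAnc hlabel Esub hEsub EQ hEQ
end

section
/- Suppose in a finite directed graph every vertex u with d(u,i) ≤ k−1 has its correct tuple recorded, and the update rule recomputes each vertex's table as its own tuple at distance 0 together with predecessors' tuples with distance incremented, keeping only minimum-distance entries. Then after one more synchronous update, every vertex u with d(u,i) ≤ k has its correct tuple recorded at i (induction step of topology collection). -/
/-!
Entries of the raw table at `i` with distance `≤ k` come from entries of distance `< k` at
predecessors, which are correct by the second invariant, so they record genuine paths. Conversely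
a shortest path of length `n ≤ k` to `i` ends with an edge `j → i` after a shortest path of length
`n - 1` to `j`, whose tuple is recorded at `j` by the first invariant. Hence, among raw entries
with distance `≤ k`, the minimal ones are exactly the true distances.
-/

/-- `PathLen E u v m` : there is a directed path of length `m` from `u` to `v`. -/
def PathLen {V : Type*} (E : V → V → Prop) (u v : V) (m : ℕ) : Prop :=
  ∃ p : Fin (m + 1) → V, p 0 = u ∧ p (Fin.last m) = v ∧
    ∀ a : Fin m, E (p a.castSucc) (p a.succ)

/-- `IsDist E u v n` : `n` is the distance from `u` to `v`, i.e. the length of a shortest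
directed path from `u` to `v`. -/
def IsDist {V : Type*} (E : V → V → Prop) (u v : V) (n : ℕ) : Prop :=
  PathLen E u v n ∧ ∀ m : ℕ, PathLen E u v m → n ≤ m

/-- The set of predecessors of a vertex. -/
def Preds {V : Type*} (E : V → V → Prop) (v : V) : Set V := {u | E u v}

/-- The first clause of the invariant after round `k`: every vertex `u` at distance
`< k` from `i` has its correct tuple `(u, P.u, d(u,i))` recorded in the table of `i`. -/
def Inv1 {V : Type*} (E : V → V → Prop) (T : V → Set (V × Set V × ℕ)) (k : ℕ) : Prop :=
  ∀ i u : V, ∀ n : ℕ, IsDist E u i n → n < k → (u, Preds E u, n) ∈ T i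

/-- The second clause of the invariant after round `k`: every recorded tuple with distance
field `< k` is correct. -/
def Inv2 {V : Type*} (E : V → V → Prop) (T : V → Set (V × Set V × ℕ)) (k : ℕ) : Prop :=
  ∀ i u : V, ∀ P : Set V, ∀ n : ℕ, (u, P, n) ∈ T i → n < k →
    P = Preds E u ∧ IsDist E u i n

/-- The raw table obtained at `i` by one update step: `i`'s own tuple at distance `0`
together with the predecessors' tuples with distance incremented. -/
def RawUpdate {V : Type*} (E : V → V → Prop) (T : V → Set (V × Set V × ℕ)) (i : V) :
    Set (V × Set V × ℕ) :=
  {(i, Preds E i, 0)} ∪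
    {t : V × Set V × ℕ | ∃ j : V, E j i ∧ ∃ P : Set V, ∃ n : ℕ,
      (t.1, P, n) ∈ T j ∧ t.2.1 = P ∧ t.2.2 = n + 1}

/-- One synchronous update step: recompute the raw table and keep, for each vertex key,
only the entries of minimum distance. -/
def Update {V : Type*} (E : V → V → Prop) (T : V → Set (V × Set V × ℕ)) (i : V) :
    Set (V × Set V × ℕ) :=
  {t ∈ RawUpdate E T i | ∀ t' ∈ RawUpdate E T i, t'.1 = t.1 → t.2.2 ≤ t'.2.2}

section Paths

variable {V : Type*} {E : V → V → Prop} {u v : V}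

lemma pathLen_zero_iff : PathLen E u v 0 ↔ u = v :=
  ⟨fun ⟨_, h0, hl, _⟩ => h0 ▸ hl ▸ rfl, fun h => ⟨fun _ => v, h.symm, rfl, fun a => a.elim0⟩⟩

lemma pathLen_succ_iff {m : ℕ} : PathLen E u v (m + 1) ↔ ∃ j, PathLen E u j m ∧ E j v := by
  constructor
  · rintro ⟨p, h0, hl, he⟩
    refine ⟨p (Fin.last m).castSucc, ⟨p ∘ Fin.castSucc, h0, rfl, fun a => ?_⟩, ?_⟩
    · simpa only [Function.comp_apply, Fin.succ_castSucc] using he a.castSucc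
    · simpa only [Fin.succ_last, hl] using he (Fin.last m)
  · rintro ⟨j, ⟨p, h0, hl, he⟩, hE⟩
    refine ⟨Fin.snoc p v, by simpa using h0, by simp, fun a => ?_⟩
    induction a using Fin.lastCases with
    | last => simpa only [Fin.succ_last, Fin.snoc_last, Fin.snoc_castSucc, hl] using hE
    | cast b => simpa only [Fin.succ_castSucc, Fin.snoc_castSucc] using he b

lemma isDist_zero_iff : IsDist E u v 0 ↔ u = v :=
  ⟨fun h => pathLen_zero_iff.mp h.1, fun h => ⟨pathLen_zero_iff.mpr h, fun m _ => m.zero_le⟩⟩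

lemma PathLen.exists_isDist_le {m : ℕ} (h : PathLen E u v m) : ∃ d, IsDist E u v d ∧ d ≤ m := by
  classical
  have hex : ∃ n, PathLen E u v n := ⟨m, h⟩
  exact ⟨Nat.find hex, ⟨Nat.find_spec hex, fun _ => Nat.find_le⟩, Nat.find_le h⟩

lemma PathLen.isDist {n : ℕ} (h : PathLen E u v n) (hmin : ∀ d, IsDist E u v d → n ≤ d) :
    IsDist E u v n := by
  obtain ⟨d, hd, hdn⟩ := h.exists_isDist_le
  exact le_antisymm hdn (hmin d hd) ▸ hd

lemma IsDist.exists_pred {m : ℕ} (h : IsDist E u v (m + 1)) : ∃ j, E j v ∧ IsDist E u j m := by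
  obtain ⟨j, hj, hE⟩ := pathLen_succ_iff.mp h.1
  refine ⟨j, hE, hj.isDist fun d hd => ?_⟩
  have := h.2 (d + 1) (pathLen_succ_iff.mpr ⟨j, hd.1, hE⟩)
  omega

end Paths

section Update

variable {V : Type*} {E : V → V → Prop} {T : V → Set (V × Set V × ℕ)} {k : ℕ}

lemma mem_rawUpdate_iff {i u : V} {P : Set V} {n : ℕ} :
    (u, P, n) ∈ RawUpdate E T i ↔
      (u = i ∧ P = Preds E i ∧ n = 0) ∨ ∃ j, E j i ∧ ∃ m, (u, P, m) ∈ T j ∧ n = m + 1 := by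
  simp [RawUpdate]

lemma Inv2.pathLen_of_mem_rawUpdate {i u : V} {P : Set V} {n : ℕ} (h2 : Inv2 E T k)
    (h : (u, P, n) ∈ RawUpdate E T i) (hn : n < k + 1) : P = Preds E u ∧ PathLen E u i n := by
  rcases mem_rawUpdate_iff.mp h with ⟨rfl, rfl, rfl⟩ | ⟨j, hE, m, hT, rfl⟩
  · exact ⟨rfl, pathLen_zero_iff.mpr rfl⟩
  · obtain ⟨hP, hd⟩ := h2 j u P m hT (by omega)
    exact ⟨hP, pathLen_succ_iff.mpr ⟨j, hd.1, hE⟩⟩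

lemma Inv1.mem_rawUpdate {i u : V} {n : ℕ} (h1 : Inv1 E T k) (h : IsDist E u i n) (hn : n < k + 1) :
    (u, Preds E u, n) ∈ RawUpdate E T i := by
  refine mem_rawUpdate_iff.mpr ?_
  cases n with
  | zero =>
    obtain rfl := isDist_zero_iff.mp h
    exact .inl ⟨rfl, rfl, rfl⟩
  | succ m =>
    obtain ⟨j, hE, hj⟩ := h.exists_pred
    exact .inr ⟨j, hE, m, h1 j u m hj (by omega), rfl⟩

end Update

theorem stmt17_general {V : Type*} (E : V → V → Prop)
    (T : V → Set (V × Set V × ℕ)) (k : ℕ)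
    (h1 : Inv1 E T k) (h2 : Inv2 E T k) :
    Inv1 E (fun i => Update E T i) (k + 1) ∧ Inv2 E (fun i => Update E T i) (k + 1) := by
  constructor
  · intro i u n hd hn
    refine ⟨h1.mem_rawUpdate hd hn, fun ⟨u', P', m⟩ hraw hu => ?_⟩
    obtain rfl : u' = u := hu
    show n ≤ m
    by_contra! hm
    exact (hd.2 m (h2.pathLen_of_mem_rawUpdate hraw (by omega)).2).not_gt hm
  · intro i u P n ⟨hraw, hmin⟩ hn
    obtain ⟨hP, hpath⟩ := h2.pathLen_of_mem_rawUpdate hraw hn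
    exact ⟨hP, hpath.isDist fun d hd =>
      hmin _ (h1.mem_rawUpdate hd (lt_of_le_of_lt (hd.2 n hpath) hn)) rfl⟩

/-- Induction step of the topology-collection lemma: if, at every vertex, the table is
correct up to distance `k - 1` (both invariant clauses at `k`), then after one more
synchronous update step both clauses hold at `k + 1`; in particular every vertex `u` with
`d(u, i) ≤ k` has its correct tuple recorded at `i`. -/
theorem stmt17 {V : Type*} [Fintype V] (E : V → V → Prop)
    (T : V → Set (V × Set V × ℕ)) (k : ℕ)
    (h1 : Inv1 E T k) (h2 : Inv2 E T k) :
    Inv1 E (fun i => Update E T i) (k + 1) ∧ Inv2 E (fun i => Update E T i) (k + 1) :=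
  stmt17_general E T k h1 h2
end

section
/- In a finite directed graph, every vertex u reachable to i satisfies d(u,i) ≤ D(i), where D(i) is the maximum over all ancestors of i of their distance to i; moreover if the collected topology at i is correct for all tuples with distance ≤ D(i) and contains correct tuples for all ancestors, then after removing entries for vertices not reaching i in the recorded topology, the recorded topology equals exactly the subgraph induced by i and its ancestors. -/
/-- The edge relation described by a recorded topology `T` (a set of tuples
`(v, P, d)` where `P` is the recorded predecessor set of `v`): there is a recorded edge
`u → v` whenever some tuple `(v, P, d) ∈ T` has `u ∈ P`. -/
def RecEdge {V : Type*} (T : Set (V × Set V × ℕ)) (u v : V) : Prop :=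
  ∃ P : Set V, ∃ n : ℕ, (v, P, n) ∈ T ∧ u ∈ P

/-- Let `G` be a finite directed graph, `i` a vertex, and `D` the maximum distance to `i`
over all ancestors of `i`.  Then (1) every vertex reaching `i` has distance at most `D`
to `i`; and (2) if the collected topology `T` at `i` contains the correct tuple of every
ancestor of `i`, every tuple of `T` with distance field at most `D` is correct, `T`
records at most one tuple per vertex, and every recorded vertex reaches `i` in the
recorded topology, then the vertex set of `T` is exactly `{i} ∪ ancestors(i)` and every
recorded predecessor set is correct. -/
theorem stmt18 {V : Type*} [Fintype V] (E : V → V → Prop) (i : V) (D : ℕ)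
    (hD : IsGreatest {n : ℕ | ∃ u : V, Relation.ReflTransGen E u i ∧ IsDist E u i n} D)
    (T : Set (V × Set V × ℕ))
    (ha : ∀ u : V, Relation.ReflTransGen E u i →
      ∃ n : ℕ, IsDist E u i n ∧ (u, Preds E u, n) ∈ T)
    (hb : ∀ u : V, ∀ P : Set V, ∀ n : ℕ, (u, P, n) ∈ T → n ≤ D →
      P = Preds E u ∧ IsDist E u i n)
    (hfun : ∀ u : V, ∀ P P' : Set V, ∀ n n' : ℕ,
      (u, P, n) ∈ T → (u, P', n') ∈ T → P = P' ∧ n = n')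
    (hc : ∀ u : V, ∀ P : Set V, ∀ n : ℕ, (u, P, n) ∈ T →
      Relation.ReflTransGen (RecEdge T) u i) :
    (∀ u : V, ∀ n : ℕ, Relation.ReflTransGen E u i → IsDist E u i n → n ≤ D) ∧
      {u : V | ∃ P : Set V, ∃ n : ℕ, (u, P, n) ∈ T} =
        {u : V | Relation.ReflTransGen E u i} ∧
      (∀ u : V, ∀ P : Set V, ∀ n : ℕ, (u, P, n) ∈ T → P = Preds E u) := by
  have key : ∀ u : V, Relation.ReflTransGen (RecEdge T) u i →
      Relation.ReflTransGen E u i := by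
    intro u h
    induction h using Relation.ReflTransGen.head_induction_on with
    | refl => exact Relation.ReflTransGen.refl
    | head hr _ ih =>
      rename_i a c _
      obtain ⟨P, n, hT, huP⟩ := hr
      obtain ⟨m, hm, hmT⟩ := ha c ih
      obtain ⟨hPeq, -⟩ := hfun c P (Preds E c) n m hT hmT
      have : a ∈ Preds E c := hPeq ▸ huP
      exact Relation.ReflTransGen.head this ih
  refine ⟨?_, ?_, ?_⟩
  · intro u n hu hd
    exact hD.2 ⟨u, hu, hd⟩
  · ext u
    constructor
    · rintro ⟨P, n, hT⟩
      exact key u (hc u P n hT)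
    · intro hu
      obtain ⟨n, -, hT⟩ := ha u hu
      exact ⟨Preds E u, n, hT⟩
  · intro u P n hT
    obtain ⟨m, -, hmT⟩ := ha u (key u (hc u P n hT))
    exact (hfun u P (Preds E u) n m hT hmT).1
end
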